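/- arXiv:1602.01963 — 2 statements merged into one kernel-verified Lean document; each statement's English description precedes it below -/
import Mathlib

section
/- Let G be a parity game with colors in {1,...,d}, j ∈ {0,1} a player, i ≥ 0 an integer, and s a state of G. Then s ∈ B^{i+1}_j(G) if and only if (s, 0) ∈ Attr_j(G†_j, B^i_j(G) × [1,d]_j), where [1,d]_j is the set of colors in {1,...,d} congruent to j mod 2. -/
/-- A parity game: an owner (player `0` or `1`) for each state, a total
transition relation `R` and a coloring `c` of the states. -/
structure ParityGame (S : Type) where
  owner : S → Fin 2
  R : S → S → Prop
  total : ∀ s, ∃ t, R s t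
  c : S → ℕ

namespace ParityGame

variable {S : Type}

/-- The value `e` occurs infinitely often in the sequence `π`. -/
def InfOften (π : ℕ → ℕ) (e : ℕ) : Prop := ∀ n, ∃ i, n ≤ i ∧ π i = e

/-- `π ∈ Ω_j` : `π` is bounded and the largest value occurring infinitely often
in `π` is congruent to `j` mod 2. -/
def InOmega (j : Fin 2) (π : ℕ → ℕ) : Prop :=
  (∃ k, ∀ i, π i ≤ k) ∧
  ∃ e, InfOften π e ∧ (∀ e', InfOften π e' → e' ≤ e) ∧ e % 2 = (j : ℕ)

/-- `π ∈ Λ_j` : `π ∈ Ω_j` and the largest non-initial entry of `π` is congruent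
to `j` mod 2. -/
def InLambda (j : Fin 2) (π : ℕ → ℕ) : Prop :=
  InOmega j π ∧ ∃ i, 1 ≤ i ∧ (∀ k, 1 ≤ k → π k ≤ π i) ∧ π i % 2 = (j : ℕ)

variable (G : ParityGame S)

/-- A play: an infinite sequence of states respecting the transition relation. -/
def IsPlay (ρ : ℕ → S) : Prop := ∀ i, G.R (ρ i) (ρ (i + 1))

/-- A strategy is modelled as a function from (past history, current state) to a
successor of the current state. -/
def IsStrategy (σ : List S → S → S) : Prop := ∀ h s, G.R s (σ h s)

/-- A play is compatible with a strategy `σ` of player `j` if at every state owned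
by `j` the play follows `σ` (applied to the history so far). -/
def Compatible (j : Fin 2) (σ : List S → S → S) (ρ : ℕ → S) : Prop :=
  ∀ i, G.owner (ρ i) = j → ρ (i + 1) = σ (List.ofFn fun k : Fin i => ρ k.val) (ρ i)

/-- A strategy is memoryless if it only depends on the current state. -/
def Memoryless (σ : List S → S → S) : Prop := ∀ h h' s, σ h s = σ h' s

/-- The color sequence of a play. -/
def colorSeq (ρ : ℕ → S) : ℕ → ℕ := fun i => G.c (ρ i)

/-- The segment `ρ_a ρ_{a+1} ... ρ_b` is `j`-dominating: it has at least one
transition and the largest color among its non-initial states is ≡ j (mod 2). -/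
def SegDom (j : Fin 2) (ρ : ℕ → S) (a b : ℕ) : Prop :=
  a < b ∧ ((Finset.Icc (a + 1) b).sup fun k => G.c (ρ k)) % 2 = (j : ℕ)

/-- The play `ρ` begins with an infinite number of consecutive `j`-dominating
sequences. -/
def BeginsInfDom (j : Fin 2) (ρ : ℕ → S) : Prop :=
  ∃ idx : ℕ → ℕ, idx 0 = 0 ∧ ∀ ℓ, G.SegDom j ρ (idx ℓ) (idx (ℓ + 1))

/-- The play `ρ` begins with (at least) `k` consecutive `j`-dominating sequences. -/
def BeginsKDom (j : Fin 2) (ρ : ℕ → S) (k : ℕ) : Prop :=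
  ∃ idx : ℕ → ℕ, idx 0 = 0 ∧ ∀ ℓ < k, G.SegDom j ρ (idx ℓ) (idx (ℓ + 1))

/-- The (infinite) play `ρ` is itself `j`-dominating : the largest color among
its non-initial states is ≡ j (mod 2). -/
def PlayDom (j : Fin 2) (ρ : ℕ → S) : Prop :=
  ∃ i, 1 ≤ i ∧ (∀ k, 1 ≤ k → G.c (ρ k) ≤ G.c (ρ i)) ∧ G.c (ρ i) % 2 = (j : ℕ)

/-- The winning region `W_j(G)` of player `j`. -/
def WinRegion (j : Fin 2) : Set S :=
  {s | ∃ σ, G.IsStrategy σ ∧ ∀ ρ, G.IsPlay ρ → ρ 0 = s → G.Compatible j σ ρ →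
    InOmega j (G.colorSeq ρ)}

/-- The winning core `A_j(G)` of player `j`. -/
def WinCore (j : Fin 2) : Set S :=
  {s | ∃ σ, G.IsStrategy σ ∧ ∀ ρ, G.IsPlay ρ → ρ 0 = s → G.Compatible j σ ρ →
    G.BeginsInfDom j ρ}

/-- `A^k_j(G)` : states from which player `j` can ensure that the play begins
with at least `k` consecutive `j`-dominating sequences. -/
def WinCoreK (j : Fin 2) (k : ℕ) : Set S :=
  {s | ∃ σ, G.IsStrategy σ ∧ ∀ ρ, G.IsPlay ρ → ρ 0 = s → G.Compatible j σ ρ →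
    G.BeginsKDom j ρ k}

/-- The restricted parity game `G ↾ T` (given that the restricted transition
relation is total). -/
def restrict (T : Set S) (h : ∀ s : T, ∃ t : T, G.R s.1 t.1) : ParityGame T where
  owner s := G.owner s.1
  R a b := G.R a.1 b.1
  total := h
  c s := G.c s.1

end ParityGame

/-- Membership in the attractor `Attr_j(G, T)` : the least set containing `T`,
closed under adding states from which player `j` controls reaching it. -/
inductive ParityGame.AttrRel {S : Type} (G : ParityGame S) (j : Fin 2) (T : Set S) : S → Prop
  | base {s} : s ∈ T → AttrRel G j T s
  | own {s t} : G.owner s = j → G.R s t → AttrRel G j T t → AttrRel G j T s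
  | opp {s} : G.owner s ≠ j → (∀ t, G.R s t → AttrRel G j T t) → AttrRel G j T s

namespace ParityGame

variable {S : Type} (G : ParityGame S)

/-- The attractor `Attr_j(G, T)` as a set. -/
def attractor (j : Fin 2) (T : Set S) : Set S := {s | AttrRel G j T s}

/-- The positive attractor `Attr⁺_j(G, T)`. -/
def posAttractor (j : Fin 2) (T : Set S) : Set S :=
  G.attractor j ({s | G.owner s = j ∧ ∃ t ∈ T, G.R s t} ∪
                 {s | G.owner s ≠ j ∧ ∀ t, G.R s t → t ∈ T})

/-- The product game `G†_j` over states `S × {0, ..., d}`. -/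
def prodGame (j : Fin 2) (d : ℕ) (hc : ∀ s, G.c s ≤ d) :
    ParityGame (S × Fin (d + 1)) where
  owner p := G.owner p.1
  R p q := G.R p.1 q.1 ∧ (q.2 : ℕ) = max (p.2 : ℕ) (G.c q.1)
  total p := by
    obtain ⟨t, ht⟩ := G.total p.1
    refine ⟨(t, ⟨max (p.2 : ℕ) (G.c t), ?_⟩), ht, rfl⟩
    exact Nat.lt_succ_iff.mpr (max_le (Nat.lt_succ_iff.mp p.2.isLt) (hc t))
  c p := if (p.2 : ℕ) % 2 = (j : ℕ) then G.c p.1 else (p.2 : ℕ)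

/-- `X` is a fatal attractor for player `j`: all states in `X` have the same
color `e ≡ j (mod 2)` and from every state of `X` player `j` can force the play
back to `X` without passing a color greater than `e`. -/
def FatalAttractor (j : Fin 2) (X : Set S) : Prop :=
  ∃ e, e % 2 = (j : ℕ) ∧ (∀ s ∈ X, G.c s = e) ∧
    ∀ s ∈ X, ∃ σ, G.IsStrategy σ ∧ ∀ ρ, G.IsPlay ρ → ρ 0 = s → G.Compatible j σ ρ →
      ∃ k, 0 < k ∧ ρ k ∈ X ∧ ∀ i, 0 < i → i ≤ k → G.c (ρ i) ≤ e

/-- `T` is `j`-closed: player `j` can force the play to stay in `T`. -/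
def JClosed (j : Fin 2) (T : Set S) : Prop :=
  (∀ s ∈ T, G.owner s ≠ j → ∀ t, G.R s t → t ∈ T) ∧
  (∀ s ∈ T, G.owner s = j → ∃ t ∈ T, G.R s t)

/-- The restriction of `G` to a `j`-closed set has a total transition relation. -/
theorem JClosed.totalOn {G : ParityGame S} {j : Fin 2} {T : Set S}
    (h : G.JClosed j T) : ∀ s : T, ∃ t : T, G.R s.1 t.1 := by
  rintro ⟨s, hs⟩
  by_cases hj : G.owner s = j
  · obtain ⟨t, ht, hrt⟩ := h.2 s hs hj
    exact ⟨⟨t, ht⟩, hrt⟩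
  · obtain ⟨t, hrt⟩ := G.total s
    exact ⟨⟨t, h.1 s hs hj t hrt⟩, hrt⟩

end ParityGame

namespace ParityGame

/-- The sequence `B^i_j(G)` of under-approximations of the winning core. -/
def Bset {S : Type} (G : ParityGame S) (j : Fin 2) : ℕ → Set S
  | 0 => Set.univ
  | i + 1 =>
    {s | s ∈ Bset G j i ∧ ∃ σ, G.IsStrategy σ ∧ ∀ ρ, G.IsPlay ρ → ρ 0 = s →
      G.Compatible j σ ρ → ∃ k, G.SegDom j ρ 0 k ∧ ρ k ∈ Bset G j i}

open Classical in
/-- Rank of a color sequence according to the order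
`Λ₁ ◁ Ω₁ \ Λ₁ ◁ Ω₀ \ Λ₀ ◁ Λ₀`; the preference relation `≤₀` of player 0
compares these ranks. -/
noncomputable def prefRank (π : ℕ → ℕ) : ℕ :=
  if InLambda 0 π then 3
  else if InOmega 0 π then 2
  else if InLambda 1 π then 0
  else 1

/-- The reward order `≺_j` on colors. -/
def RewardLt (j : Fin 2) (v u : ℕ) : Prop :=
  (v < u ∧ u % 2 = (j : ℕ)) ∨ (u < v ∧ v % 2 = ((1 - j : Fin 2) : ℕ))

end ParityGame


namespace ParityGame

section Attr

variable {X : Type} (Hm : ParityGame X) (j : Fin 2) (T : Set X)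

/-- Finite iterates of the attractor construction. -/
def attrN : ℕ → Set X
  | 0 => T
  | n + 1 => (attrN n ∪ {s | Hm.owner s = j ∧ ∃ t, Hm.R s t ∧ t ∈ attrN n})
      ∪ {s | Hm.owner s ≠ j ∧ ∀ t, Hm.R s t → t ∈ attrN n}

lemma attrN_succ_supset {n : ℕ} : attrN Hm j T n ⊆ attrN Hm j T (n + 1) := by
  intro x hx
  rw [attrN]
  exact Or.inl (Or.inl hx)

lemma attrN_mono {m n : ℕ} (h : m ≤ n) : attrN Hm j T m ⊆ attrN Hm j T n := by
  induction h with
  | refl => exact fun _ h => h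
  | step _ ih => exact fun x hx => attrN_succ_supset Hm j T (ih hx)

lemma attrN_subset_attrRel : ∀ n : ℕ, ∀ s ∈ attrN Hm j T n, AttrRel Hm j T s := by
  intro n
  induction n with
  | zero => exact fun s hs => AttrRel.base hs
  | succ n ih =>
    intro s hs
    rw [attrN] at hs
    rcases hs with (hs | ⟨ho, t, hrt, ht⟩) | ⟨ho, hall⟩
    · exact ih s hs
    · exact AttrRel.own ho hrt (ih t ht)
    · exact AttrRel.opp ho fun t ht => ih t (hall t ht)

open Classical in
/-- The rank of a state in the attractor. -/
noncomputable def attrRank (s : X) : ℕ :=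
  if h : ∃ n, s ∈ attrN Hm j T n then Nat.find h else 0

lemma mem_attrN_attrRank {s : X} (h : ∃ n, s ∈ attrN Hm j T n) :
    s ∈ attrN Hm j T (attrRank Hm j T s) := by
  classical
  rw [attrRank, dif_pos h]
  exact Nat.find_spec h

lemma attrRank_le {s : X} {n : ℕ} (h : s ∈ attrN Hm j T n) : attrRank Hm j T s ≤ n := by
  classical
  rw [attrRank, dif_pos ⟨n, h⟩]
  exact Nat.find_le h

lemma attrRel_iff_exists [Fintype X] {s : X} :
    AttrRel Hm j T s ↔ ∃ n, s ∈ attrN Hm j T n := by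
  constructor
  · intro h
    induction h with
    | base h => exact ⟨0, h⟩
    | @own s t ho hr _ ih =>
      obtain ⟨n, hn⟩ := ih
      refine ⟨n + 1, ?_⟩
      rw [attrN]
      exact Or.inl (Or.inr ⟨ho, t, hr, hn⟩)
    | @opp s ho hall ih =>
      refine ⟨Finset.univ.sup (attrRank Hm j T) + 1, ?_⟩
      rw [attrN]
      refine Or.inr ⟨ho, fun t ht => ?_⟩
      exact attrN_mono Hm j T (Finset.le_sup (Finset.mem_univ t))
        (mem_attrN_attrRank Hm j T (ih t ht))
  · rintro ⟨n, hn⟩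
    exact attrN_subset_attrRel Hm j T n s hn

lemma attrRank_pos {s : X} (h : ∃ n, s ∈ attrN Hm j T n) (hT : s ∉ T) :
    1 ≤ attrRank Hm j T s := by
  rcases Nat.eq_zero_or_pos (attrRank Hm j T s) with h0 | h1
  · have := mem_attrN_attrRank Hm j T h
    rw [h0] at this
    exact absurd this hT
  · exact h1

lemma not_mem_attrN_lt {s : X} {m : ℕ} (hm : m < attrRank Hm j T s) :
    s ∉ attrN Hm j T m := fun hmem => absurd (attrRank_le Hm j T hmem) (Nat.not_le.mpr hm)

lemma attr_step_own {s : X} (hs : ∃ n, s ∈ attrN Hm j T n) (hT : s ∉ T)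
    (ho : Hm.owner s = j) :
    ∃ t, Hm.R s t ∧ t ∈ attrN Hm j T (attrRank Hm j T s - 1) := by
  have hpos := attrRank_pos Hm j T hs hT
  have hmem := mem_attrN_attrRank Hm j T hs
  obtain ⟨m, hm⟩ : ∃ m, attrRank Hm j T s = m + 1 := ⟨attrRank Hm j T s - 1, by omega⟩
  rw [hm, attrN] at hmem
  have hnot : s ∉ attrN Hm j T m := not_mem_attrN_lt Hm j T (by omega)
  rcases hmem with (hmem | ⟨_, t, hrt, ht⟩) | ⟨ho', _⟩
  · exact absurd hmem hnot
  · exact ⟨t, hrt, by rw [hm]; simpa using ht⟩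
  · exact absurd ho ho'

lemma attr_step_opp {s : X} (hs : ∃ n, s ∈ attrN Hm j T n) (hT : s ∉ T)
    (ho : Hm.owner s ≠ j) :
    ∀ t, Hm.R s t → t ∈ attrN Hm j T (attrRank Hm j T s - 1) := by
  have hpos := attrRank_pos Hm j T hs hT
  have hmem := mem_attrN_attrRank Hm j T hs
  obtain ⟨m, hm⟩ : ∃ m, attrRank Hm j T s = m + 1 := ⟨attrRank Hm j T s - 1, by omega⟩
  rw [hm, attrN] at hmem
  have hnot : s ∉ attrN Hm j T m := not_mem_attrN_lt Hm j T (by omega)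
  rcases hmem with (hmem | ⟨ho', _⟩) | ⟨_, hall⟩
  · exact absurd hmem hnot
  · exact absurd ho' ho
  · intro t ht
    rw [hm]
    simpa using hall t ht

end Attr

section BsetLemmas

variable {S : Type}

lemma bset_succ_eq (G : ParityGame S) (j : Fin 2) (i : ℕ) :
    G.Bset j (i + 1) = {s | s ∈ G.Bset j i ∧ ∃ σ, G.IsStrategy σ ∧ ∀ ρ, G.IsPlay ρ →
      ρ 0 = s → G.Compatible j σ ρ → ∃ k, G.SegDom j ρ 0 k ∧ ρ k ∈ G.Bset j i} := by
  rw [Bset]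

lemma pset_subset_bset (G : ParityGame S) (j : Fin 2) : ∀ i : ℕ, ∀ s : S,
    (∃ σ, G.IsStrategy σ ∧ ∀ ρ, G.IsPlay ρ → ρ 0 = s → G.Compatible j σ ρ →
      ∃ k, G.SegDom j ρ 0 k ∧ ρ k ∈ G.Bset j i) → s ∈ G.Bset j i := by
  intro i
  induction i with
  | zero => intro s _; trivial
  | succ i ih =>
    rintro s ⟨σ, hσ, hw⟩
    have hP : ∃ σ, G.IsStrategy σ ∧ ∀ ρ, G.IsPlay ρ → ρ 0 = s → G.Compatible j σ ρ →
        ∃ k, G.SegDom j ρ 0 k ∧ ρ k ∈ G.Bset j i := by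
      refine ⟨σ, hσ, fun ρ h1 h2 h3 => ?_⟩
      obtain ⟨k, hk1, hk2⟩ := hw ρ h1 h2 h3
      rw [bset_succ_eq] at hk2
      exact ⟨k, hk1, hk2.1⟩
    rw [bset_succ_eq]
    exact ⟨ih s hP, hP⟩

/-- The running maximum of the non-initial colors along a play. -/
def Vseq (G : ParityGame S) (ρ : ℕ → S) : ℕ → ℕ
  | 0 => 0
  | n + 1 => max (Vseq G ρ n) (G.c (ρ (n + 1)))

/-- Reconstruct the running maximum from a history and the current state. -/
def vOf (G : ParityGame S) : List S → S → ℕ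
  | [], _ => 0
  | _ :: t, s => max ((t.map G.c).foldr max 0) (G.c s)

lemma foldr_max_eq (l : List ℕ) (a : ℕ) : l.foldr max a = max (l.foldr max 0) a := by
  induction l with
  | nil => simp
  | cons x l ih => simp [List.foldr_cons, ih, max_assoc]

lemma vOf_le (G : ParityGame S) {d : ℕ} (hc : ∀ s, G.c s ≤ d) (h : List S) (s : S) :
    G.vOf h s ≤ d := by
  match h with
  | [] => exact Nat.zero_le d
  | x :: t =>
    rw [vOf]
    refine max_le ?_ (hc s)
    induction t with
    | nil => simp
    | cons y t iht => simpa using ⟨hc y, iht⟩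

lemma Vseq_le (G : ParityGame S) {d : ℕ} (hc : ∀ s, G.c s ≤ d) (ρ : ℕ → S) :
    ∀ n, G.Vseq ρ n ≤ d := by
  intro n
  induction n with
  | zero => exact Nat.zero_le d
  | succ n ih => exact max_le ih (hc _)

lemma Icc_one_succ (n : ℕ) : Finset.Icc 1 (n + 1) = insert (n + 1) (Finset.Icc 1 n) := by
  ext m
  simp only [Finset.mem_Icc, Finset.mem_insert]
  omega

lemma Vseq_eq_sup (G : ParityGame S) (ρ : ℕ → S) :
    ∀ n, G.Vseq ρ n = (Finset.Icc 1 n).sup fun k => G.c (ρ k) := by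
  intro n
  induction n with
  | zero => simp [Vseq]
  | succ n ih =>
    rw [Vseq, ih, Icc_one_succ, Finset.sup_insert]
    exact (max_comm _ _).trans (by rfl)

lemma foldr_ofFn_shift (G : ParityGame S) (ρ : ℕ → S) :
    ∀ n : ℕ, (((List.ofFn fun k : Fin n => ρ (k.val + 1)).map G.c).foldr max 0)
      = G.Vseq ρ n := by
  intro n
  induction n with
  | zero => simp [Vseq]
  | succ n ih =>
    rw [List.ofFn_succ']
    simp only [Fin.coe_castSucc, Fin.val_last, List.concat_eq_append, List.map_append,
      List.foldr_append, List.map_cons, List.map_nil, List.foldr_cons, List.foldr_nil]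
    rw [foldr_max_eq, ih, Vseq]
    simp [max_comm]

lemma vOf_hist (G : ParityGame S) (ρ : ℕ → S) :
    ∀ n : ℕ, G.vOf (List.ofFn fun k : Fin n => ρ k.val) (ρ n) = G.Vseq ρ n := by
  intro n
  match n with
  | 0 => simp [vOf, Vseq]
  | n + 1 =>
    rw [List.ofFn_succ, vOf]
    have h1 : (List.ofFn fun i : Fin n => ρ ((i.succ : Fin (n+1)).val))
        = List.ofFn fun i : Fin n => ρ (i.val + 1) := by
      simp [Fin.val_succ]
    rw [h1, foldr_ofFn_shift, Vseq]

end BsetLemmas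

end ParityGame


open ParityGame

/-- `s ∈ B^{i+1}_j(G)` iff
`(s, 0) ∈ Attr_j(G†_j, B^i_j(G) × [1,d]_j)`. -/
theorem mem_bset_succ_iff_mem_attractor_prodGame {S : Type} [Fintype S]
    (G : ParityGame S) (j : Fin 2) (d : ℕ) (hc : ∀ s, 1 ≤ G.c s ∧ G.c s ≤ d)
    (i : ℕ) (s : S)
    (T : Set (S × Fin (d + 1)))
    (hT : T = {p | p.1 ∈ G.Bset j i ∧ (p.2 : ℕ) ∈ Finset.Icc 1 d ∧
      (p.2 : ℕ) % 2 = (j : ℕ)}) :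
    s ∈ G.Bset j (i + 1) ↔
      ((s, (0 : Fin (d + 1))) : S × Fin (d + 1)) ∈
        (G.prodGame j d fun t => (hc t).2).attractor j T := by
  classical
  set H := G.prodGame j d (fun t => (hc t).2) with hH
  constructor
  · -- forward direction
    intro hs
    rw [bset_succ_eq] at hs
    obtain ⟨-, σ, hσ, hw⟩ := hs
    by_contra hA
    replace hA : ¬ AttrRel H j T (s, (0 : Fin (d + 1))) := hA
    have step : ∀ (h : List S) (p : S × Fin (d + 1)), ∃ q : S × Fin (d + 1),
        ¬ AttrRel H j T p →
          H.R p q ∧ ¬ AttrRel H j T q ∧ (G.owner p.1 = j → q.1 = σ h p.1) := by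
      intro h p
      by_cases hp : AttrRel H j T p
      · exact ⟨(H.total p).choose, fun hp' => absurd hp hp'⟩
      · by_cases ho : G.owner p.1 = j
        · refine ⟨(σ h p.1, ⟨max (p.2 : ℕ) (G.c (σ h p.1)),
            Nat.lt_succ_of_le (max_le (Nat.lt_succ_iff.mp p.2.isLt) (hc _).2)⟩),
            fun _ => ?_⟩
          have hR : H.R p (σ h p.1, ⟨max (p.2 : ℕ) (G.c (σ h p.1)),
              Nat.lt_succ_of_le (max_le (Nat.lt_succ_iff.mp p.2.isLt) (hc _).2)⟩) :=
            ⟨hσ h p.1, rfl⟩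
          exact ⟨hR, fun hAq => hp (AttrRel.own ho hR hAq), fun _ => rfl⟩
        · have hq : ∃ q, H.R p q ∧ ¬ AttrRel H j T q := by
            by_contra hall
            push_neg at hall
            exact hp (AttrRel.opp ho fun t ht => hall t ht)
          exact ⟨hq.choose, fun _ =>
            ⟨hq.choose_spec.1, hq.choose_spec.2, fun hoj => absurd hoj ho⟩⟩
    choose nxt hnxt using step
    obtain ⟨F, hF0, hFs⟩ : ∃ F : ℕ → List S × (S × Fin (d + 1)),
        F 0 = ([], (s, 0)) ∧
        ∀ n, F (n + 1) = ((F n).1 ++ [(F n).2.1], nxt (F n).1 (F n).2) :=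
      ⟨fun n => Nat.rec (([], (s, 0)) : List S × (S × Fin (d + 1)))
        (fun _ ih => (ih.1 ++ [ih.2.1], nxt ih.1 ih.2)) n, rfl, fun n => rfl⟩
    have hinv : ∀ n, ¬ AttrRel H j T (F n).2 := by
      intro n
      induction n with
      | zero => rw [hF0]; exact hA
      | succ n ih => rw [hFs]; exact (hnxt (F n).1 (F n).2 ih).2.1
    have hR : ∀ n, H.R (F n).2 (F (n + 1)).2 := by
      intro n
      rw [hFs]
      exact (hnxt (F n).1 (F n).2 (hinv n)).1
    have hhist : ∀ n, (F n).1 = List.ofFn fun k : Fin n => (F k.val).2.1 := by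
      intro n
      induction n with
      | zero => rw [hF0]; simp
      | succ n ih =>
        rw [hFs, ih, List.ofFn_succ']
        simp [Fin.coe_castSucc, Fin.val_last, List.concat_eq_append]
    have hplay : G.IsPlay (fun n => (F n).2.1) := fun n => (hR n).1
    have hcomp : G.Compatible j σ (fun n => (F n).2.1) := by
      intro n ho
      show (F (n + 1)).2.1 = σ (List.ofFn fun k : Fin n => (F k.val).2.1) ((F n).2.1)
      rw [← hhist n, hFs]
      exact (hnxt (F n).1 (F n).2 (hinv n)).2.2 ho
    have hv : ∀ n, ((F n).2.2 : ℕ) = G.Vseq (fun n => (F n).2.1) n := by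
      intro n
      induction n with
      | zero => rw [hF0]; simp [Vseq]
      | succ n ih =>
        have h2 := (hR n).2
        rw [h2, ih]
        simp [Vseq]
    obtain ⟨k, hseg, hkB⟩ := hw (fun n => (F n).2.1) hplay (by show (F 0).2.1 = s; rw [hF0]) hcomp
    obtain ⟨hk0, hkmod⟩ := hseg
    have hTk : (F k).2 ∈ T := by
      rw [hT]
      refine ⟨hkB, ?_, ?_⟩
      · rw [Finset.mem_Icc]
        constructor
        · rw [hv k, Vseq_eq_sup]
          have h1k : (1 : ℕ) ∈ Finset.Icc 1 k := by
            rw [Finset.mem_Icc]; omega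
          exact le_trans (hc ((F 1).2.1)).1
            (Finset.le_sup (f := fun x => G.c ((F x).2.1)) h1k)
        · rw [hv k]
          exact Vseq_le G (fun t => (hc t).2) _ k
      · rw [hv k, Vseq_eq_sup]
        simpa using hkmod
    exact hinv k (AttrRel.base hTk)
  · -- backward direction
    intro hA
    replace hA : AttrRel H j T (s, (0 : Fin (d + 1))) := hA
    have hAex : ∃ n, ((s, (0 : Fin (d + 1))) : S × Fin (d + 1)) ∈ attrN H j T n :=
      (attrRel_iff_exists H j T).mp hA
    have hvle : ∀ (h : List S) (t : S), G.vOf h t ≤ d :=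
      fun h t => vOf_le G (fun u => (hc u).2) h t
    have key : ∀ p : S × Fin (d + 1), ∃ u : S, G.R p.1 u ∧
        ((∃ n, p ∈ attrN H j T n) → p ∉ T → G.owner p.1 = j →
          ((u, ⟨max (p.2 : ℕ) (G.c u),
            Nat.lt_succ_of_le (max_le (Nat.lt_succ_iff.mp p.2.isLt) (hc u).2)⟩) :
              S × Fin (d + 1))
            ∈ attrN H j T (attrRank H j T p - 1)) := by
      intro p
      by_cases hcnd : (∃ n, p ∈ attrN H j T n) ∧ p ∉ T ∧ G.owner p.1 = j
      · obtain ⟨hex, hTn, ho⟩ := hcnd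
        obtain ⟨q, hq, hqm⟩ := attr_step_own H j T hex hTn ho
        refine ⟨q.1, hq.1, fun _ _ _ => ?_⟩
        convert hqm using 1
        exact Prod.ext rfl (Fin.ext hq.2.symm)
      · obtain ⟨u, hu⟩ := G.total p.1
        exact ⟨u, hu, fun h1 h2 h3 => absurd ⟨h1, h2, h3⟩ hcnd⟩
    choose mv hmvR hmvA using key
    have hσR : G.IsStrategy (fun (h : List S) (t : S) =>
        mv (t, ⟨G.vOf h t, Nat.lt_succ_of_le (hvle h t)⟩)) :=
      fun h t => hmvR (t, ⟨G.vOf h t, Nat.lt_succ_of_le (hvle h t)⟩)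
    have hmain : ∀ ρ, G.IsPlay ρ → ρ 0 = s →
        G.Compatible j (fun (h : List S) (t : S) =>
          mv (t, ⟨G.vOf h t, Nat.lt_succ_of_le (hvle h t)⟩)) ρ →
        ∃ k, G.SegDom j ρ 0 k ∧ ρ k ∈ G.Bset j i := by
      intro ρ hplay hρ0 hcomp
      have hlt : ∀ n, G.Vseq ρ n < d + 1 :=
        fun n => Nat.lt_succ_of_le (Vseq_le G (fun u => (hc u).2) ρ n)
      obtain ⟨L, hLdef⟩ : ∃ L : ℕ → S × Fin (d + 1),
          ∀ n, L n = (ρ n, ⟨G.Vseq ρ n, hlt n⟩) :=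
        ⟨fun n => (ρ n, ⟨G.Vseq ρ n, hlt n⟩), fun n => rfl⟩
      have hL1 : ∀ n, (L n).1 = ρ n := by intro n; rw [hLdef]
      have hL2 : ∀ n, ((L n).2 : ℕ) = G.Vseq ρ n := by intro n; rw [hLdef]
      have hLR : ∀ n, H.R (L n) (L (n + 1)) := by
        intro n
        rw [hLdef, hLdef]
        exact ⟨hplay n, by simp [Vseq]⟩
      have reach : ∀ m, ∀ n, L n ∈ attrN H j T m → ∃ k, n ≤ k ∧ L k ∈ T := by
        intro m
        induction m using Nat.strong_induction_on with
        | _ m ih =>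
          intro n hn
          by_cases hTn : L n ∈ T
          · exact ⟨n, le_rfl, hTn⟩
          have hex : ∃ m', L n ∈ attrN H j T m' := ⟨m, hn⟩
          have hrle : attrRank H j T (L n) ≤ m := attrRank_le H j T hn
          have hrpos : 1 ≤ attrRank H j T (L n) := attrRank_pos H j T hex hTn
          have hnext : L (n + 1) ∈ attrN H j T (attrRank H j T (L n) - 1) := by
            by_cases ho : G.owner (ρ n) = j
            · have ho' : G.owner (L n).1 = j := by rw [hL1]; exact ho
              have hstep := hmvA (L n) hex hTn ho'
              have hpair : ((ρ n, ⟨G.vOf (List.ofFn fun k : Fin n => ρ k.val) (ρ n),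
                  Nat.lt_succ_of_le (hvle (List.ofFn fun k : Fin n => ρ k.val) (ρ n))⟩) :
                    S × Fin (d + 1)) = L n := by
                rw [hLdef]
                exact Prod.ext rfl (Fin.ext (vOf_hist G ρ n))
              have h1 : ρ (n + 1) = mv (L n) := by
                rw [hcomp n ho]
                exact congrArg mv hpair
              have hLs : L (n + 1) = (mv (L n), ⟨max ((L n).2 : ℕ) (G.c (mv (L n))),
                  Nat.lt_succ_of_le (max_le (Nat.lt_succ_iff.mp (L n).2.isLt)
                    (hc (mv (L n))).2)⟩) := by
                rw [hLdef (n + 1)]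
                refine Prod.ext h1 (Fin.ext ?_)
                show G.Vseq ρ (n + 1) = max ((L n).2 : ℕ) (G.c (mv (L n)))
                rw [hL2, ← h1]
                simp [Vseq]
              rw [hLs]
              exact hstep
            · have ho' : H.owner (L n) ≠ j := by
                show G.owner (L n).1 ≠ j
                rw [hL1]; exact ho
              exact attr_step_opp H j T hex hTn ho' (L (n + 1)) (hLR n)
          obtain ⟨k, hk1, hk2⟩ := ih (attrRank H j T (L n) - 1) (by omega) (n + 1) hnext
          exact ⟨k, by omega, hk2⟩
      have hL0 : L 0 = ((s, (0 : Fin (d + 1))) : S × Fin (d + 1)) := by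
        rw [hLdef, hρ0]
        exact Prod.ext rfl (Fin.ext (by simp [Vseq]))
      obtain ⟨m, hm⟩ := hAex
      obtain ⟨k, -, hkT⟩ := reach m 0 (by rw [hL0]; exact hm)
      have hk0 : 0 < k := by
        rcases Nat.eq_zero_or_pos k with rfl | h
        · exfalso
          rw [hL0, hT] at hkT
          obtain ⟨-, h2, -⟩ := hkT
          simp [Finset.mem_Icc] at h2
        · exact h
      rw [hT, hLdef] at hkT
      obtain ⟨hB, hIcc, hmod⟩ := hkT
      have hmod' : G.Vseq ρ k % 2 = (j : ℕ) := hmod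
      rw [Vseq_eq_sup] at hmod'
      refine ⟨k, ⟨hk0, ?_⟩, hB⟩
      simpa using hmod'
    rw [bset_succ_eq]
    exact ⟨pset_subset_bset G j i s ⟨_, hσR, hmain⟩, _, hσR, hmain⟩
end

section
/- Let G be a parity game with colors in {1,...,d}, j ∈ {0,1} a player, i ≥ 0 an integer, s a state of G, and k ∈ {0,...,d}. If (s, k) ∈ Attr_j(G†_j, B^i_j(G) × [1,d]_j), then for every k' ∈ {0,...,d} with k ≺_j k' we also have (s, k') ∈ Attr_j(G†_j, B^i_j(G) × [1,d]_j). -/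
open ParityGame

private lemma rewardLt_max_aux {j : Fin 2} {v v' : ℕ} (m : ℕ) (h : RewardLt j v v') :
    max v m = max v' m ∨ RewardLt j (max v m) (max v' m) := by
  rcases h with ⟨h1, h2⟩ | ⟨h1, h2⟩
  · rcases le_or_gt v' m with hm | hm
    · left; omega
    · right; left
      rw [max_eq_left hm.le]
      exact ⟨max_lt h1 hm, h2⟩
  · rcases le_or_gt v m with hm | hm
    · left; omega
    · right; right
      rw [max_eq_left hm.le]
      exact ⟨max_lt h1 hm, h2⟩

/-- The attractor `Attr_j(G†_j, B^i_j(G) × [1,d]_j)` is upward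
closed in the reward order `≺_j` on the recorded value: if `(s, k)` belongs to it
and `k ≺_j k'` then `(s, k')` belongs to it. -/
theorem attractor_prodGame_upward_closed {S : Type} [Fintype S]
    (G : ParityGame S) (j : Fin 2) (d : ℕ) (hc : ∀ s, 1 ≤ G.c s ∧ G.c s ≤ d)
    (i : ℕ) (s : S)
    (T : Set (S × Fin (d + 1)))
    (hT : T = {p | p.1 ∈ G.Bset j i ∧ (p.2 : ℕ) ∈ Finset.Icc 1 d ∧
      (p.2 : ℕ) % 2 = (j : ℕ)})
    (k : Fin (d + 1))
    (hk : ((s, k) : S × Fin (d + 1)) ∈ (G.prodGame j d fun t => (hc t).2).attractor j T) :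
    ∀ k' : Fin (d + 1), RewardLt j (k : ℕ) (k' : ℕ) →
      ((s, k') : S × Fin (d + 1)) ∈ (G.prodGame j d fun t => (hc t).2).attractor j T := by
  have hjne : ((1 - j : Fin 2) : ℕ) ≠ (j : ℕ) := by fin_cases j <;> decide
  set Gp := G.prodGame j d fun t => (hc t).2 with hGp
  have main : ∀ p : S × Fin (d + 1), Gp.AttrRel j T p →
      ∀ v' : Fin (d + 1), RewardLt j (p.2 : ℕ) (v' : ℕ) → Gp.AttrRel j T (p.1, v') := by
    intro p hp
    induction hp with
    | @base p hpT =>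
      intro v' hv'
      subst hT
      obtain ⟨hB, hIcc, hmod⟩ := hpT
      rcases hv' with ⟨h1, h2⟩ | ⟨h1, h2⟩
      · apply AttrRel.base
        refine ⟨hB, ?_, h2⟩
        simp only [Finset.mem_Icc] at hIcc ⊢
        have := v'.isLt
        omega
      · exact absurd (h2.symm.trans hmod) hjne
    | @own p q hown hR hAttr ih =>
      intro v' hv'
      have hm : G.c q.1 ≤ d := (hc q.1).2
      set w : Fin (d + 1) := ⟨max (v' : ℕ) (G.c q.1),
        Nat.lt_succ_iff.mpr (max_le (Nat.lt_succ_iff.mp v'.isLt) hm)⟩ with hw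
      have hstep : Gp.R (p.1, v') (q.1, w) := ⟨hR.1, rfl⟩
      have hattr : Gp.AttrRel j T (q.1, w) := by
        rcases rewardLt_max_aux (G.c q.1) hv' with heq | hlt
        · have : q.2 = w := by
            apply Fin.ext
            rw [hR.2]; exact heq
          have hq : q = (q.1, w) := by rw [← this]
          rw [← hq]; exact hAttr
        · apply ih
          show RewardLt j (q.2 : ℕ) (w : ℕ)
          rw [hR.2]
          exact hlt
      exact AttrRel.own hown hstep hattr
    | @opp p hown h ih =>
      intro v' hv'
      refine AttrRel.opp (s := (p.1, v')) hown ?_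
      rintro ⟨t, u⟩ ⟨htR, hu⟩
      have hm : G.c t ≤ d := (hc t).2
      set q : S × Fin (d + 1) := (t, ⟨max ((p.2 : Fin (d+1)) : ℕ) (G.c t),
        Nat.lt_succ_iff.mpr (max_le (Nat.lt_succ_iff.mp p.2.isLt) hm)⟩) with hq
      have hstep : Gp.R p q := ⟨htR, rfl⟩
      rcases rewardLt_max_aux (G.c t) hv' with heq | hlt
      · have : u = q.2 := by
          apply Fin.ext
          rw [hu]; exact heq.symm
        have : (t, u) = q := by rw [this]
        rw [this]; exact h q hstep
      · have : RewardLt j (q.2 : ℕ) (u : ℕ) := by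
          show RewardLt j (max ((p.2 : Fin (d+1)) : ℕ) (G.c t)) (u : ℕ)
          rw [hu]; exact hlt
        exact ih q hstep u this
  intro k' hk'
  exact main (s, k) hk k' hk'
end
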